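/- arXiv:1304.5232 — 3 statements merged into one kernel-verified Lean document; each statement's English description precedes it below -/
import Mathlib

section
/- Let N ≥ 1, let M be the N×N matrix with all entries equal to 1, and let B be any N×N matrix with entries in {0,1} having exactly k ones (so edge density β = k/N²). Then the 2N×2N block matrix T = [[M, M],[B, M]] satisfies: every nonzero eigenvalue λ of T satisfies (λ − N)² = k, i.e., λ = N + √k or λ = N − √k. -/
open Matrix in
/-- For `T = [[M,M],[B,M]]` with `M` the all-ones matrix and `B` a 0-1
matrix with exactly `k` ones, every nonzero eigenvalue `μ` of `T` satisfies `(μ-N)² = k`. -/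
theorem stmt0 (N : ℕ) (hN : 1 ≤ N) (k : ℕ)
    (B : Matrix (Fin N) (Fin N) ℂ)
    (hB01 : ∀ i j, B i j = 0 ∨ B i j = 1)
    (hBk : ∑ i, ∑ j, B i j = (k : ℂ)) :
    let M : Matrix (Fin N) (Fin N) ℂ := fun _ _ => 1
    let T : Matrix (Fin N ⊕ Fin N) (Fin N ⊕ Fin N) ℂ := Matrix.fromBlocks M M B M
    ∀ μ ∈ spectrum ℂ T, μ ≠ 0 → (μ - N) ^ 2 = (k : ℂ) := by
  intro M T μ hμ hμ0
  rw [spectrum.mem_iff, Matrix.isUnit_iff_isUnit_det, isUnit_iff_ne_zero, not_not] at hμ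
  obtain ⟨v, hv0, hv⟩ := Matrix.exists_mulVec_eq_zero_iff.2 hμ
  have hTv : T *ᵥ v = μ • v := by
    rw [Matrix.sub_mulVec, sub_eq_zero] at hv
    rw [← hv]
    simp [Matrix.algebraMap_eq_diagonal, Matrix.diagonal_mulVec_single]
    ext i
    simp [Matrix.mulVec, dotProduct, Matrix.diagonal_apply, Pi.algebraMap_apply,
      Finset.mul_sum, apply_ite (· * v _), Algebra.algebraMap_self_apply]
  set s := ∑ i, v (Sum.inl i) with hs_def
  set t := ∑ i, v (Sum.inr i) with ht_def
  have h1 : ∀ i : Fin N, s + t = μ * v (Sum.inl i) := by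
    intro i
    have := congrFun hTv (Sum.inl i)
    simpa [Matrix.mulVec, dotProduct, Fintype.sum_sum_type, T, M,
      Matrix.fromBlocks, hs_def, ht_def] using this
  have h2 : ∀ i : Fin N, (∑ j, B i j * v (Sum.inl j)) + t = μ * v (Sum.inr i) := by
    intro i
    have := congrFun hTv (Sum.inr i)
    simpa [Matrix.mulVec, dotProduct, Fintype.sum_sum_type, T, M,
      Matrix.fromBlocks, hs_def, ht_def] using this
  have hs : μ * s = N * (s + t) := by
    rw [hs_def, Finset.mul_sum]
    have : ∀ i ∈ Finset.univ, μ * v (Sum.inl i) = s + t := fun i _ => (h1 i).symm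
    rw [Finset.sum_congr rfl this, Finset.sum_const, Finset.card_univ, Fintype.card_fin,
      nsmul_eq_mul]
  have ht : μ * (μ * t) = k * (s + t) + μ * (N * t) := by
    have e1 : μ * t = (∑ i, ∑ j, B i j * v (Sum.inl j)) + N * t := by
      rw [ht_def, Finset.mul_sum]
      have : ∀ i ∈ Finset.univ, μ * v (Sum.inr i)
          = (∑ j, B i j * v (Sum.inl j)) + t := fun i _ => (h2 i).symm
      rw [Finset.sum_congr rfl this, Finset.sum_add_distrib, Finset.sum_const,
        Finset.card_univ, Fintype.card_fin, nsmul_eq_mul]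
    have e2 : μ * ((∑ i, ∑ j, B i j * v (Sum.inl j)) + N * t)
        = k * (s + t) + μ * (N * t) := by
      rw [mul_add, Finset.mul_sum]
      congr 1
      have : ∀ i ∈ Finset.univ, μ * ∑ j, B i j * v (Sum.inl j)
          = ∑ j, B i j * (s + t) := by
        intro i _
        rw [Finset.mul_sum]
        refine Finset.sum_congr rfl fun j _ => ?_
        linear_combination (-(B i j)) * h1 j
      rw [Finset.sum_congr rfl this]
      have : (∑ i, ∑ j, B i j * (s + t)) = (∑ i, ∑ j, B i j) * (s + t) := by
        rw [Finset.sum_mul]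
        exact Finset.sum_congr rfl fun i _ => (Finset.sum_mul _ _ _).symm
      rw [this, hBk]
    rw [e1, e2]
  have hu : s + t ≠ 0 := by
    intro h
    have hx : ∀ i, v (Sum.inl i) = 0 := by
      intro i
      have := h1 i
      rw [h] at this
      exact (mul_eq_zero.1 this.symm).resolve_left hμ0
    have hs0 : s = 0 := Finset.sum_eq_zero fun i _ => hx i
    have ht0 : t = 0 := by rw [hs0, zero_add] at h; exact h
    have hy : ∀ i, v (Sum.inr i) = 0 := by
      intro i
      have := h2 i
      rw [ht0, add_zero, Finset.sum_eq_zero (fun j _ => by rw [hx j, mul_zero])] at this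
      exact (mul_eq_zero.1 this.symm).resolve_left hμ0
    apply hv0
    funext j
    cases j with
    | inl i => exact hx i
    | inr i => exact hy i
  have key : (s + t) * ((μ - N) ^ 2 - k) = 0 := by
    linear_combination (μ - N) * hs + ht
  rcases mul_eq_zero.1 key with h | h
  · exact absurd h hu
  · exact sub_eq_zero.1 h
end

section
/- Let N ≥ 1, M the N×N all-ones matrix, and B an N×N matrix with entries in {0,1} with exactly k ones, where 0 < k. Then the vector (V, W) with V_j = N + √k for all j and W_j = φ_j(B) + √k, where φ_j(B) is the number of ones in row j of B, is an eigenvector of the block matrix T = [[M, M],[B, M]] with eigenvalue N + √k. -/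
/-!
The all-ones matrix `M` sends `v` to the constant vector `∑ v`, and the entries of `W` sum to
`k + N √k` because the row sums of `B` add up to `k = (√k)²`. Hence the top block of `T u` is
`N (N + √k) + k + N √k = (N + √k)²` and the bottom block is `φ_j (N + √k) + k + N √k`,
i.e. `(N + √k) (φ_j + √k)`.
-/

namespace Matrix

variable {ι R : Type*} [Fintype ι] [CommRing R]

lemma ones_mulVec (v : ι → R) : (fun _ _ => 1 : Matrix ι ι R) *ᵥ v = fun _ => ∑ i, v i := by
  ext
  simp [mulVec, dotProduct]

lemma fromBlocks_ones_mulVec_eq_smul (B : Matrix ι ι R) {s : R}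
    (hs : s * s = ∑ i, ∑ j, B i j) :
    let M : Matrix ι ι R := fun _ _ => 1
    let u : ι ⊕ ι → R := Sum.elim (fun _ => (Fintype.card ι : R) + s) (fun j => ∑ i, B j i + s)
    fromBlocks M M B M *ᵥ u = ((Fintype.card ι : R) + s) • u := by
  intro M u
  have sum_W : ∑ j, (∑ i, B j i + s) = s * s + Fintype.card ι * s := by
    rw [Finset.sum_add_distrib, hs, Finset.sum_const, Finset.card_univ, nsmul_eq_mul]
  rw [fromBlocks_mulVec, ones_mulVec, ones_mulVec]
  ext (j | j)
  · simp only [u, Sum.elim_comp_inl, Sum.elim_comp_inr, Sum.elim_inl, Pi.add_apply,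
      Finset.sum_const, Finset.card_univ, nsmul_eq_mul, sum_W, Pi.smul_apply, smul_eq_mul]
    ring
  · simp only [u, Sum.elim_comp_inl, Sum.elim_comp_inr, Sum.elim_inr, Pi.add_apply, mulVec,
      dotProduct, ← Finset.sum_mul, sum_W, Pi.smul_apply, smul_eq_mul]
    ring

end Matrix

open Matrix in
theorem stmt1_general (N : ℕ) (hN : 1 ≤ N) (k : ℕ)
    (B : Matrix (Fin N) (Fin N) ℝ)
    (hBk : ∑ i, ∑ j, B i j = (k : ℝ)) :
    let M : Matrix (Fin N) (Fin N) ℝ := fun _ _ => 1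
    let T : Matrix (Fin N ⊕ Fin N) (Fin N ⊕ Fin N) ℝ := Matrix.fromBlocks M M B M
    let u : Fin N ⊕ Fin N → ℝ :=
      Sum.elim (fun _ => (N : ℝ) + Real.sqrt k) (fun j => (∑ i, B j i) + Real.sqrt k)
    T.mulVec u = ((N : ℝ) + Real.sqrt k) • u ∧ u ≠ 0 := by
  intro M T u
  refine ⟨?_, fun hu => ?_⟩
  · have hs : √(k : ℝ) * √(k : ℝ) = ∑ i, ∑ j, B i j := by
      rw [Real.mul_self_sqrt k.cast_nonneg, hBk]
    simpa using fromBlocks_ones_mulVec_eq_smul B hs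
  · have h0 := congrFun hu (Sum.inl ⟨0, hN⟩)
    have hN' : (1 : ℝ) ≤ N := by exact_mod_cast hN
    simp only [u, Sum.elim_inl, Pi.zero_apply] at h0
    linarith [Real.sqrt_nonneg (k : ℝ)]

open Matrix in
/-- the vector `(V,W)` with `V_j = N + √k`, `W_j = φ_j(B) + √k`
is an eigenvector of `T = [[M,M],[B,M]]` with eigenvalue `N + √k`. -/
theorem stmt1 (N : ℕ) (hN : 1 ≤ N) (k : ℕ) (hk : 0 < k)
    (B : Matrix (Fin N) (Fin N) ℝ)
    (hB01 : ∀ i j, B i j = 0 ∨ B i j = 1)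
    (hBk : ∑ i, ∑ j, B i j = (k : ℝ)) :
    let M : Matrix (Fin N) (Fin N) ℝ := fun _ _ => 1
    let T : Matrix (Fin N ⊕ Fin N) (Fin N ⊕ Fin N) ℝ := Matrix.fromBlocks M M B M
    let u : Fin N ⊕ Fin N → ℝ :=
      Sum.elim (fun _ => (N : ℝ) + Real.sqrt k) (fun j => (∑ i, B j i) + Real.sqrt k)
    T.mulVec u = ((N : ℝ) + Real.sqrt k) • u ∧ u ≠ 0 :=
  stmt1_general N hN k B hBk
end

section
/- Let N ≥ 1 and let T = [[M, M],[B, M]] with M the N×N all-ones matrix and B an N×N 0-1 matrix with exactly k ones, 0 ≤ k ≤ N². Then the product of (λ − N − √k)(λ − N + √k)·λ^{2N−2} equals the characteristic polynomial of T; equivalently, det(λI − T) = λ^{2N−2}(λ² − 2Nλ + N² − k) for all λ. -/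
/-!
Write `T = C + 𝟙 𝟙ᵀ` with `C = [[0, 0], [B - M, 0]]`, so that `C² = 0`. For `λ ≠ 0` the matrix
`λ - C` then has determinant `λ^(2N)` and inverse `λ⁻¹ + λ⁻² C`, and the matrix determinant lemma
gives `det (λ - T) = λ^(2N) (1 - 2N λ⁻¹ - λ⁻² 𝟙ᵀ C 𝟙)` with `𝟙ᵀ C 𝟙 = k - N²`. Both sides are
continuous in `λ`, which settles `λ = 0`.
-/

namespace Matrix

open Polynomial

variable {n : Type*} [Fintype n]

theorem one_dotProduct_mulVec_one {R : Type*} [CommSemiring R] (A : Matrix n n R) :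
    1 ⬝ᵥ A *ᵥ 1 = ∑ i, ∑ j, A i j := by
  simp [dotProduct, mulVec]

variable [DecidableEq n]

theorem charpoly_eq_X_pow_of_isNilpotent {R : Type*} [CommRing R] [IsDomain R]
    {C : Matrix n n R} (hC : IsNilpotent C) : C.charpoly = X ^ Fintype.card n :=
  sub_eq_zero.mp (isNilpotent_charpoly_sub_pow_of_isNilpotent hC).eq_zero

theorem det_smul_one_sub_of_isNilpotent {R : Type*} [CommRing R] [IsDomain R]
    {C : Matrix n n R} (hC : IsNilpotent C) (t : R) : det (t • 1 - C) = t ^ Fintype.card n := by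
  rw [smul_one_eq_diagonal, ← scalar_apply, ← eval_charpoly, charpoly_eq_X_pow_of_isNilpotent hC,
    eval_pow, eval_X]

variable {K : Type*} [Field K] {C : Matrix n n K}

theorem inv_smul_one_sub_of_mul_self_eq_zero (hC : C * C = 0) {t : K} (ht : t ≠ 0) :
    (t • 1 - C)⁻¹ = t⁻¹ • 1 + (t ^ 2)⁻¹ • C := by
  refine inv_eq_right_inv ?_
  simp only [Matrix.sub_mul, Matrix.mul_add, Matrix.mul_smul, Matrix.smul_mul, hC, Matrix.one_mul,
    Matrix.mul_one]
  match_scalars <;> grind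

theorem det_smul_one_sub_add_vecMulVec (hC : C * C = 0) {t : K} (ht : t ≠ 0) (u v : n → K) :
    det (t • 1 - (C + vecMulVec u v)) =
      t ^ Fintype.card n * (1 - t⁻¹ * (v ⬝ᵥ u) - (t ^ 2)⁻¹ * (v ⬝ᵥ C *ᵥ u)) := by
  have hdet : det (t • 1 - C) = t ^ Fintype.card n :=
    det_smul_one_sub_of_isNilpotent ⟨2, by rw [sq, hC]⟩ t
  rw [sub_add_eq_sub_sub, sub_eq_add_neg, ← neg_vecMulVec, vecMulVec_eq (Fin 1),
    det_add_mul _ _ (by simp [hdet, ht]), hdet,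
    inv_smul_one_sub_of_mul_self_eq_zero hC ht]
  simp only [det_unique]
  rw [Matrix.add_apply, one_apply_eq, ← replicateRow_vecMul, replicateRow_mul_replicateCol_apply]
  simp only [vecMul_add, vecMul_smul, vecMul_one, add_dotProduct, smul_dotProduct, dotProduct_neg,
    ← dotProduct_mulVec, smul_eq_mul]
  ring

end Matrix

open Matrix in
theorem stmt14_general (N : ℕ) (hN : 1 ≤ N) (k : ℕ)
    (B : Matrix (Fin N) (Fin N) ℝ)
    (hBk : ∑ i, ∑ j, B i j = (k : ℝ)) :
    let M : Matrix (Fin N) (Fin N) ℝ := fun _ _ => 1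
    let T : Matrix (Fin N ⊕ Fin N) (Fin N ⊕ Fin N) ℝ := Matrix.fromBlocks M M B M
    ∀ lam : ℝ, (lam • (1 : Matrix (Fin N ⊕ Fin N) (Fin N ⊕ Fin N) ℝ) - T).det =
      lam ^ (2 * N - 2) * (lam ^ 2 - 2 * N * lam + ((N : ℝ) ^ 2 - k)) := by
  intro M T
  have hM : ∀ i j, M i j = 1 := fun _ _ => rfl
  set C : Matrix (Fin N ⊕ Fin N) (Fin N ⊕ Fin N) ℝ := fromBlocks 0 0 (B - M) 0
  have hT : T = C + vecMulVec 1 1 := by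
    ext (i | i) (j | j) <;> simp [T, C, hM, vecMulVec]
  have hC : C * C = 0 := by simp [C, fromBlocks_multiply]
  have hCsum : 1 ⬝ᵥ C *ᵥ 1 = (k : ℝ) - N ^ 2 := by
    simp [one_dotProduct_mulVec_one, C, Fintype.sum_sum_type, Finset.sum_sub_distrib, hBk, hM, sq]
  have hcard : Fintype.card (Fin N ⊕ Fin N) = 2 * N := by simp [two_mul]
  have key : ∀ t ∈ ({0}ᶜ : Set ℝ), (t • 1 - T).det =
      t ^ (2 * N - 2) * (t ^ 2 - 2 * N * t + ((N : ℝ) ^ 2 - k)) := by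
    intro t ht
    have ht : t ≠ 0 := ht
    have hpow : t ^ (2 * N) = t ^ (2 * N - 2) * t ^ 2 := by
      rw [← pow_add, Nat.sub_add_cancel (by omega : 2 ≤ 2 * N)]
    rw [hT, det_smul_one_sub_add_vecMulVec hC ht, hCsum, one_dotProduct_one, hcard, hpow]
    field_simp
    push_cast
    ring
  exact congrFun (Continuous.ext_on (dense_compl_singleton 0) (by fun_prop) (by fun_prop) key)

open Matrix in
/-- `det(λI − T) = λ^(2N−2) (λ² − 2Nλ + N² − k)` for
`T = [[M,M],[B,M]]` with `B` a 0-1 matrix with exactly `k` ones. -/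
theorem stmt14 (N : ℕ) (hN : 1 ≤ N) (k : ℕ) (hk : k ≤ N ^ 2)
    (B : Matrix (Fin N) (Fin N) ℝ)
    (hB01 : ∀ i j, B i j = 0 ∨ B i j = 1)
    (hBk : ∑ i, ∑ j, B i j = (k : ℝ)) :
    let M : Matrix (Fin N) (Fin N) ℝ := fun _ _ => 1
    let T : Matrix (Fin N ⊕ Fin N) (Fin N ⊕ Fin N) ℝ := Matrix.fromBlocks M M B M
    ∀ lam : ℝ, (lam • (1 : Matrix (Fin N ⊕ Fin N) (Fin N ⊕ Fin N) ℝ) - T).det =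
      lam ^ (2 * N - 2) * (lam ^ 2 - 2 * N * lam + ((N : ℝ) ^ 2 - k)) :=
  stmt14_general N hN k B hBk
end
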